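/- arXiv:1707.03947 — 4 statements merged into one kernel-verified Lean document; each statement's English description precedes it below -/
import Mathlib

section
/- There exists a Δ⁰₂ (limit computable) set R ⊆ ℕ which is canonically immune. -/
/-- The `e`-th computably enumerable set. -/
def WSet (e : ℕ) : Set ℕ := {n | ((Denumerable.ofNat Nat.Partrec.Code e).eval n).Dom}

/-- A canonical numbering: a computable surjection onto the finite subsets of `ℕ`. -/
def CanonicalNumbering (D : ℕ → Finset ℕ) : Prop := Computable D ∧ Function.Surjective D

/-- `R` is canonically immune with modulus of immunity `h`. -/
def CanonImmuneMod (R : Set ℕ) (h : ℕ → ℕ) : Prop :=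
  R.Infinite ∧ ∀ D : ℕ → Finset ℕ, CanonicalNumbering D →
    ∀ᶠ i in Filter.atTop, ↑(D i) ⊆ R → (D i).card ≤ h i

/-- `R` is canonically immune. -/
def CanonicallyImmune (R : Set ℕ) : Prop :=
  ∃ h : ℕ → ℕ, Computable h ∧ CanonImmuneMod R h

/-- `R` is Δ⁰₂ (limit computable). -/
def Delta02 (R : Set ℕ) : Prop :=
  ∃ f : ℕ → ℕ → Bool, Computable₂ f ∧
    ∀ n, ∀ᶠ s in Filter.atTop, (f s n = true ↔ n ∈ R)

/-- Partial functions recursive in an oracle `O : ℕ → ℕ`. -/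
inductive RecursiveInOracle (O : ℕ → ℕ) : (ℕ →. ℕ) → Prop
  | zero : RecursiveInOracle O fun _ => 0
  | succ : RecursiveInOracle O fun n => Part.some (n + 1)
  | left : RecursiveInOracle O fun n => Part.some (Nat.unpair n).1
  | right : RecursiveInOracle O fun n => Part.some (Nat.unpair n).2
  | oracle : RecursiveInOracle O fun n => Part.some (O n)
  | pair {f g} : RecursiveInOracle O f → RecursiveInOracle O g →
      RecursiveInOracle O fun n => Nat.pair <$> f n <*> g n
  | comp {f g} : RecursiveInOracle O f → RecursiveInOracle O g →
      RecursiveInOracle O fun n => g n >>= f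
  | prec {f g} : RecursiveInOracle O f → RecursiveInOracle O g →
      RecursiveInOracle O (Nat.unpaired fun a n =>
        n.rec (f a) fun y IH => do let i ← IH; g (Nat.pair a (Nat.pair y i)))
  | rfind {f} : RecursiveInOracle O f →
      RecursiveInOracle O fun a => Nat.rfind fun n => (fun m => m = 0) <$> f (Nat.pair a n)

open Classical in
/-- Characteristic function of a set of naturals. -/
noncomputable def chi (A : Set ℕ) : ℕ → ℕ := fun n => if n ∈ A then 1 else 0

/-- `A` is Turing reducible to the oracle `O`. -/
def TuringReducibleTo (A : Set ℕ) (O : ℕ → ℕ) : Prop :=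
  RecursiveInOracle O fun n => Part.some (chi A n)

/-- `A` is Turing reducible to the set `B`. -/
def TuringReducibleSet (A B : Set ℕ) : Prop := TuringReducibleTo A (chi B)

/-- The oracle given by a real `G ∈ 2^ω`. -/
def oracleOf (G : ℕ → Bool) : ℕ → ℕ := fun n => cond (G n) 1 0

/-- `S` is computably enumerable relative to the real `G`. -/
def CEIn (G : ℕ → Bool) (S : Set ℕ) : Prop :=
  ∃ f : ℕ →. ℕ, RecursiveInOracle (oracleOf G) f ∧ S = {n | (f n).Dom}

/-- The length-`n` initial segment of a real. -/
def initSeg (G : ℕ → Bool) (n : ℕ) : List Bool := List.ofFn fun i : Fin n => G i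

/-- A Σ⁰₂ set of binary strings. -/
def Sigma02Strings (X : Set (List Bool)) : Prop :=
  ∃ p : List Bool → ℕ → ℕ → Bool,
    (Computable fun x : List Bool × ℕ × ℕ => p x.1 x.2.1 x.2.2) ∧
    X = {σ | ∃ m, ∀ k, p σ m k = true}

/-- A (Cohen) 2-generic real. -/
def TwoGeneric (G : ℕ → Bool) : Prop :=
  ∀ X : Set (List Bool), Sigma02Strings X →
    (∃ n, initSeg G n ∈ X) ∨ (∃ n, ∀ τ, initSeg G n <+: τ → τ ∉ X)

/-- A computably enumerable set of binary strings. -/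
def CEStrings (X : Set (List Bool)) : Prop :=
  ∃ p : List Bool → ℕ → Bool, Computable₂ p ∧ X = {σ | ∃ s, p σ s = true}

/-- A dense set of binary strings. -/
def DenseStrings (X : Set (List Bool)) : Prop := ∀ σ, ∃ τ, σ <+: τ ∧ τ ∈ X

/-- A weakly 1-generic real. -/
def Weakly1Generic (G : ℕ → Bool) : Prop :=
  ∀ X : Set (List Bool), CEStrings X → DenseStrings X → ∃ n, initSeg G n ∈ X

/-- A hyperimmune set: infinite and its increasing enumeration (principal function)
is not dominated by any computable function. -/
def Hyperimmune (R : Set ℕ) : Prop :=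
  R.Infinite ∧ ∀ f : ℕ → ℕ, Computable f →
    ∃ᶠ n in Filter.atTop, f n < Nat.nth (· ∈ R) n

/-- A (computable) Mathias condition `[a, A]`. -/
structure MathiasCond where
  a : Finset ℕ
  A : Set ℕ
  infinite : A.Infinite
  comp : ComputablePred (· ∈ A)
  lt : ∀ x ∈ a, ∀ y ∈ A, x < y

/-- `c'` extends `c` as a Mathias condition. -/
def MathiasCond.Extends (c' c : MathiasCond) : Prop :=
  c.a ⊆ c'.a ∧ (↑c'.a \ ↑c.a : Set ℕ) ⊆ c.A ∧ c'.A ⊆ c.A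

/-- A dense family of Mathias conditions. -/
def MathiasDense (𝒳 : Set MathiasCond) : Prop := ∀ c, ∃ c' ∈ 𝒳, c'.Extends c

/-- `R ∈ [a, A]`. -/
def MathiasCond.Mem (c : MathiasCond) (R : Set ℕ) : Prop :=
  ↑c.a ⊆ R ∧ R ⊆ ↑c.a ∪ c.A

/-- `R` meets the family `𝒳` of Mathias conditions. -/
def Meets (R : Set ℕ) (𝒳 : Set MathiasCond) : Prop := ∃ c ∈ 𝒳, c.Mem R

/-- The arithmetical sets of naturals: closure of the computable sets under
complementation and projection. -/
inductive Arithmetical : Set ℕ → Prop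
  | of_computable {S : Set ℕ} : ComputablePred (· ∈ S) → Arithmetical S
  | compl {S : Set ℕ} : Arithmetical S → Arithmetical {n | n ∉ S}
  | proj {S : Set ℕ} : Arithmetical S → Arithmetical {n | ∃ m, Nat.pair n m ∈ S}

open Classical in
/-- `n` codes the Mathias condition `c`: its first component is the canonical code of the
finite set and its second component is an index for the characteristic function of `A`. -/
noncomputable def CondCode (n : ℕ) (c : MathiasCond) : Prop :=
  n.unpair.1 = Encodable.encode c.a ∧
  ∀ x, ((Denumerable.ofNat Nat.Partrec.Code n.unpair.2)).eval x = Part.some (if x ∈ c.A then 1 else 0)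

/-- The set of codes of members of `𝒳`. -/
def CodesOf (𝒳 : Set MathiasCond) : Set ℕ := {n | ∃ c ∈ 𝒳, CondCode n c}

/-- A Mathias generic real: one meeting every arithmetically definable dense family
of Mathias conditions. -/
def MathiasGeneric (R : Set ℕ) : Prop :=
  ∀ 𝒳 : Set MathiasCond, Arithmetical (CodesOf 𝒳) → MathiasDense 𝒳 → Meets R 𝒳

/-- A Σ⁰₃ set of naturals. -/
def Sigma03Set (S : Set ℕ) : Prop :=
  ∃ p : ℕ → ℕ → ℕ → ℕ → Bool,
    (Computable fun x : ℕ × ℕ × ℕ × ℕ => p x.1 x.2.1 x.2.2.1 x.2.2.2) ∧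
    S = {n | ∃ a, ∀ b, ∃ c, p n a b c = true}

/-- A Mathias 3-generic real. -/
def Mathias3Generic (R : Set ℕ) : Prop :=
  ∀ 𝒳 : Set MathiasCond, Sigma03Set (CodesOf 𝒳) → MathiasDense 𝒳 → Meets R 𝒳

/-- An effectively immune set. -/
def EffectivelyImmune (Q : Set ℕ) : Prop :=
  Q.Infinite ∧ ∃ h : ℕ → ℕ, Computable h ∧
    ∀ e, WSet e ⊆ Q → (WSet e).Finite ∧ (WSet e).ncard ≤ h e

/-- The basic cylinder of 2^ω determined by the finite string `σ`. -/
def Cyl (σ : List Bool) : Set (ℕ → Bool) := {G | ∀ i : Fin σ.length, G i = σ.get i}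

/-- The open subset of 2^ω generated by a set of strings. -/
def OpenFrom (P : Set (List Bool)) : Set (ℕ → Bool) := ⋃ σ ∈ P, Cyl σ

/-- A uniformly c.e. sequence of sets of strings. -/
def UniformlyCE (P : ℕ → Set (List Bool)) : Prop :=
  ∃ f : ℕ → List Bool → ℕ → Bool,
    (Computable fun x : ℕ × List Bool × ℕ => f x.1 x.2.1 x.2.2) ∧
    ∀ n σ, σ ∈ P n ↔ ∃ s, f n σ s = true

/-- `μ` is the uniform (fair-coin) product measure on 2^ω: every basic cylinder
determined by a string of length `l` has measure `2⁻ˡ`. -/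
def IsFairCoin (μ : MeasureTheory.Measure (ℕ → Bool)) : Prop :=
  ∀ σ : List Bool, μ (Cyl σ) = (2 ^ σ.length : ENNReal)⁻¹

/-- A Schnorr test with respect to the measure `μ`: uniformly c.e. open sets with
uniformly computable measures bounded by `2^{-n}`. -/
def SchnorrTest (μ : MeasureTheory.Measure (ℕ → Bool)) (U : ℕ → Set (ℕ → Bool)) : Prop :=
  (∃ P : ℕ → Set (List Bool), UniformlyCE P ∧ ∀ n, U n = OpenFrom (P n)) ∧
  (∃ q : ℕ → ℕ → ℚ, Computable₂ q ∧
    ∀ n k, |(q n k : ℝ) - (μ (U n)).toReal| ≤ (2 : ℝ)⁻¹ ^ k) ∧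
  ∀ n, μ (U n) ≤ (2 ^ n : ENNReal)⁻¹

/-- A Schnorr random real (with respect to the fair-coin measure `μ`). -/
def SchnorrRandom (μ : MeasureTheory.Measure (ℕ → Bool)) (G : ℕ → Bool) : Prop :=
  ∀ U : ℕ → Set (ℕ → Bool), SchnorrTest μ U → G ∉ ⋂ n, U n

open Classical in
/-- The characteristic sequence of a set of naturals, as a point of 2^ω. -/
noncomputable def chiB (R : Set ℕ) : ℕ → Bool := fun n => decide (n ∈ R)


/-!
The range of a strictly increasing function `p` that eventually dominates every computable
function is canonically immune with modulus `id`: a finite set `D i ⊆ range p` has all its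
elements below the code of `D i`, hence eventually below `p i`, so it lies in `p '' [0, i)`.
Such a `p` is `p n = n + ∑_{e, m ≤ n} φₑ(m)` (divergent values counted as `0`), and it is
limit computable because running the computations for `s` steps gives approximations that
stabilise at every argument; since `p` is increasing, `n ∈ range p` is decided by `p 0, …, p n`.
-/

open Filter Nat.Partrec

theorem StrictMono.mem_range_iff_exists_lt_succ {p : ℕ → ℕ} (hp : StrictMono p) {n : ℕ} :
    n ∈ Set.range p ↔ ∃ k < n + 1, p k = n :=
  ⟨fun ⟨k, hk⟩ => ⟨k, Nat.lt_succ_of_le (hk ▸ hp.id_le k), hk⟩,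
    fun ⟨k, _, hk⟩ => ⟨k, hk⟩⟩

theorem StrictMono.card_le_of_subset_range {p : ℕ → ℕ} (hp : StrictMono p) {s : Finset ℕ}
    {i : ℕ} (hs : ↑s ⊆ Set.range p) (hlt : ∀ x ∈ s, x < p i) : s.card ≤ i := by
  have hsub : s ⊆ (Finset.range i).image p := by
    intro x hx
    obtain ⟨k, rfl⟩ := hs hx
    exact Finset.mem_image_of_mem p (Finset.mem_range.2 (hp.lt_iff_lt.1 (hlt _ hx)))
  simpa using (Finset.card_le_card hsub).trans Finset.card_image_le

theorem delta02_range_of_eventually_eq {p : ℕ → ℕ} (hp : StrictMono p)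
    {g : ℕ → ℕ → ℕ} (hg : Primrec₂ g) (hlim : ∀ n, ∀ᶠ s in atTop, g s n = p n) :
    Delta02 (Set.range p) := by
  refine ⟨fun s n => decide (∃ k < n + 1, g s k = n), ?_, fun n => ?_⟩
  · have hR : PrimrecRel fun (k : ℕ) (x : ℕ × ℕ) => g x.1 k = x.2 :=
      Primrec.eq.comp (hg.comp (Primrec.fst.comp Primrec.snd) Primrec.fst)
        (Primrec.snd.comp Primrec.snd)
    have hP : PrimrecPred fun x : ℕ × ℕ => ∃ k ∈ List.range (x.2 + 1), g x.1 k = x.2 :=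
      hR.exists_mem_list.comp (Primrec.list_range.comp (Primrec.succ.comp Primrec.snd))
        Primrec.id
    exact hP.decide.to_comp.of_eq fun x => by simp
  · have hstable : ∀ᶠ s in atTop, ∀ k ∈ Finset.range (n + 1), g s k = p k :=
      (eventually_all_finset _).2 fun k _ => hlim k
    filter_upwards [hstable] with s hs
    rw [decide_eq_true_iff, hp.mem_range_iff_exists_lt_succ]
    exact exists_congr fun k => and_congr_right fun hk => by rw [hs k (Finset.mem_range.2 hk)]

theorem lt_of_mem_raise' : ∀ {l : List ℕ} {n x : ℕ},
    x ∈ Denumerable.raise' l n → x < n + Encodable.encode l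
  | [], _, _, h => by simp [Denumerable.raise'] at h
  | m :: l, n, x, h => by
    have hpair := Nat.add_le_pair m (Encodable.encode l)
    rw [Encodable.encode_list_cons, Encodable.encode_nat]
    rcases List.mem_cons.1 h with rfl | h
    · omega
    · have := lt_of_mem_raise' h
      omega

/-- The code of a finite set in its `Primcodable` instance (from `Denumerable.finset`, not
`Finset.encodable`) exceeds all its elements. -/
theorem lt_encode_of_mem {s : Finset ℕ} {x : ℕ} (hx : x ∈ s) :
    x < @Encodable.encode (Finset ℕ) Primcodable.toEncodable s := by
  have hmem : ∀ n, x ∈ Denumerable.ofNat (Finset ℕ) n →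
      x ∈ Denumerable.raise' (Denumerable.ofNat (List ℕ) n) 0 := fun n h => by
    change x ∈ Finset.map (Denumerable.eqv ℕ).symm.toEmbedding
      (Denumerable.raise'Finset (Denumerable.ofNat (List ℕ) n) 0) at h
    rwa [Finset.mem_map_equiv] at h
  rw [← Denumerable.ofNat_encode s] at hx
  simpa using lt_of_mem_raise' (hmem _ hx)

theorem Computable.exists_computable_bound {D : ℕ → Finset ℕ} (hD : Computable D) :
    ∃ b : ℕ → ℕ, Computable b ∧ ∀ i, ∀ x ∈ D i, x < b i :=
  ⟨_, Computable.encode.comp hD, fun _ _ => lt_encode_of_mem⟩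

theorem canonImmuneMod_range_id {p : ℕ → ℕ} (hp : StrictMono p)
    (hdom : ∀ f : ℕ → ℕ, Computable f → ∀ᶠ n in atTop, f n ≤ p n) :
    CanonImmuneMod (Set.range p) id := by
  refine ⟨Set.infinite_range_of_injective hp.injective, fun D hD => ?_⟩
  obtain ⟨b, hb, hbD⟩ := hD.1.exists_computable_bound
  filter_upwards [hdom b hb] with i hi hsub
  exact hp.card_le_of_subset_range hsub fun x hx => (hbD i x hx).trans_le hi

theorem Primrec.sum_range {α : Type*} [Primcodable α] {f : α → ℕ → ℕ}
    (hf : Primrec₂ f) :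
    Primrec₂ fun a n => ∑ k ∈ Finset.range n, f a k := by
  refine (Primrec.nat_rec (Primrec.const 0) (Primrec.nat_add.comp (Primrec.snd.comp Primrec.snd)
    (hf.comp Primrec.fst (Primrec.fst.comp Primrec.snd))).to₂).of_eq fun a n => ?_
  induction n with
  | zero => rfl
  | succ n ih => simp [Finset.sum_range_succ, ← ih]

def boxSum (g : ℕ → ℕ → ℕ) (n : ℕ) : ℕ :=
  n + ∑ e ∈ Finset.range (n + 1), ∑ m ∈ Finset.range (n + 1), g e m

theorem boxSum_strictMono (g : ℕ → ℕ → ℕ) : StrictMono (boxSum g) := by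
  refine strictMono_nat_of_lt_succ fun n => ?_
  unfold boxSum
  have hsub : Finset.range (n + 1) ⊆ Finset.range (n + 1 + 1) := by simp
  exact Nat.add_lt_add_of_lt_of_le n.lt_succ_self
    ((Finset.sum_le_sum fun e _ => Finset.sum_le_sum_of_subset hsub).trans
      (Finset.sum_le_sum_of_subset hsub))

theorem le_boxSum (g : ℕ → ℕ → ℕ) {e n : ℕ} (he : e ≤ n) : g e n ≤ boxSum g n := by
  have hinner : g e n ≤ ∑ m ∈ Finset.range (n + 1), g e m :=
    Finset.single_le_sum (fun _ _ => Nat.zero_le _) (Finset.self_mem_range_succ n)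
  have houter : ∑ m ∈ Finset.range (n + 1), g e m ≤
      ∑ e ∈ Finset.range (n + 1), ∑ m ∈ Finset.range (n + 1), g e m :=
    Finset.single_le_sum (f := fun e => ∑ m ∈ Finset.range (n + 1), g e m)
      (fun _ _ => Nat.zero_le _) (Finset.mem_range_succ_iff.2 he)
  unfold boxSum
  omega

theorem eventually_boxSum_eq {G : ℕ → ℕ → ℕ → ℕ} {g : ℕ → ℕ → ℕ}
    (h : ∀ e m, ∀ᶠ s in atTop, G s e m = g e m) (n : ℕ) :
    ∀ᶠ s in atTop, boxSum (G s) n = boxSum g n := by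
  have hstable : ∀ᶠ s in atTop, ∀ e ∈ Finset.range (n + 1), ∀ m ∈ Finset.range (n + 1),
      G s e m = g e m :=
    (eventually_all_finset _).2 fun e _ => (eventually_all_finset _).2 fun m _ => h e m
  filter_upwards [hstable] with s hs
  unfold boxSum
  rw [Finset.sum_congr rfl fun e he => Finset.sum_congr rfl (hs e he)]

theorem primrec_boxSum {G : ℕ → ℕ → ℕ → ℕ}
    (hG : Primrec fun x : ℕ × ℕ × ℕ => G x.1 x.2.1 x.2.2) :
    Primrec₂ fun s n => boxSum (G s) n := by
  have hinner : Primrec₂ fun (x : ℕ × ℕ × ℕ) m => G x.1 x.2.2 m :=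
    hG.comp (Primrec.pair (Primrec.fst.comp Primrec.fst)
      (Primrec.pair (Primrec.snd.comp (Primrec.snd.comp Primrec.fst)) Primrec.snd))
  have hrow : Primrec₂ fun (x : ℕ × ℕ) e => ∑ m ∈ Finset.range (x.2 + 1), G x.1 e m :=
    (Primrec.sum_range hinner).comp (Primrec.pair (Primrec.fst.comp Primrec.fst)
      (Primrec.pair (Primrec.snd.comp Primrec.fst) Primrec.snd))
      (Primrec.succ.comp (Primrec.snd.comp Primrec.fst))
  exact Primrec.nat_add.comp Primrec.snd
    ((Primrec.sum_range hrow).comp Primrec.id (Primrec.succ.comp Primrec.snd))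

open Classical in
/-- `φₑ(m)`, with `0` where the computation diverges. -/
noncomputable def evalOrZero (e m : ℕ) : ℕ :=
  ((Denumerable.ofNat Code e).eval m).getOrElse 0

def evalnOrZero (s e m : ℕ) : ℕ :=
  ((Denumerable.ofNat Code e).evaln s m).getD 0

theorem eventually_evalnOrZero_eq (e m : ℕ) :
    ∀ᶠ s in atTop, evalnOrZero s e m = evalOrZero e m := by
  classical
  by_cases hdom : ((Denumerable.ofNat Code e).eval m).Dom
  · obtain ⟨k, hk⟩ := Code.evaln_complete.1 (Part.get_mem hdom)
    filter_upwards [eventually_ge_atTop k] with s hs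
    rw [evalnOrZero, evalOrZero, Option.mem_def.1 (Code.evaln_mono hs hk),
      Part.getOrElse_of_dom _ hdom]
    rfl
  · refine Eventually.of_forall fun s => ?_
    have hnone : (Denumerable.ofNat Code e).evaln s m = Option.none :=
      Option.eq_none_iff_forall_not_mem.2 fun y hy =>
        hdom (Part.dom_iff_mem.2 ⟨y, Code.evaln_sound hy⟩)
    rw [evalnOrZero, evalOrZero, hnone, Part.getOrElse_of_not_dom _ hdom]
    rfl

theorem primrec_evalnOrZero : Primrec fun x : ℕ × ℕ × ℕ => evalnOrZero x.1 x.2.1 x.2.2 :=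
  Primrec.option_getD.comp (Code.primrec_evaln.comp (Primrec.pair
    (Primrec.pair Primrec.fst ((Primrec.ofNat Code).comp (Primrec.fst.comp Primrec.snd)))
    (Primrec.snd.comp Primrec.snd))) (Primrec.const 0)

theorem Computable.eventually_le_boxSum_evalOrZero {f : ℕ → ℕ} (hf : Computable f) :
    ∀ᶠ n in atTop, f n ≤ boxSum evalOrZero n := by
  obtain ⟨c, hc⟩ := Code.exists_code.1 (Partrec.nat_iff.1 hf)
  filter_upwards [eventually_ge_atTop (Encodable.encode c)] with n hn
  have hval : evalOrZero (Encodable.encode c) n = f n := by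
    rw [evalOrZero, Denumerable.ofNat_encode, hc, PFun.coe_val, Part.getOrElse_some]
  exact hval ▸ le_boxSum evalOrZero hn

/-- There is a Δ⁰₂ set `R ⊆ ω` which is canonically immune. -/
theorem exists_delta02_canonically_immune :
    ∃ R : Set ℕ, Delta02 R ∧ CanonicallyImmune R :=
  ⟨Set.range (boxSum evalOrZero),
    delta02_range_of_eventually_eq (boxSum_strictMono _) (primrec_boxSum primrec_evalnOrZero)
      (eventually_boxSum_eq eventually_evalnOrZero_eq),
    id, Computable.id,
    canonImmuneMod_range_id (boxSum_strictMono _) fun _ =>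
      Computable.eventually_le_boxSum_evalOrZero⟩
end

section
/- No weakly 1-generic real is canonically immune. -/
/-!
Given a computable candidate modulus `h`, interleave a canonical numbering of all finite sets
(odd indices) with the intervals `D (2k) = [k, k + h (2k)]` (even indices); this is again a
canonical numbering. The strings ending in a block of `h (2k) + 1` ones starting at a position
`k ≥ N` form a dense c.e. set, so a weakly 1-generic `G` contains such intervals for arbitrarily
large `k`, and each has `h (2k) + 1` elements.
-/

namespace Denumerable

theorem raise'_replicate_zero : ∀ c n : ℕ, raise' (List.replicate c 0) n = List.range' n c
  | 0, _ => rfl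
  | c + 1, n => by simp [List.replicate_succ, raise', raise'_replicate_zero c, List.range'_succ]

theorem ofNat_finset_encode (l : List ℕ) :
    ofNat (Finset ℕ) (Encodable.encode l) = raise'Finset l 0 := by
  -- `Denumerable (Finset ℕ)` decodes `n` as the set of shifted partial sums of the list coded by `n`
  change Finset.map (eqv ℕ).symm.toEmbedding
    (raise'Finset (ofNat (List ℕ) (Encodable.encode l)) 0) = _
  ext
  simp [eqv]

theorem raise'Finset_cons_replicate_zero (k c : ℕ) :
    raise'Finset (k :: List.replicate c 0) 0 = Finset.Icc k (k + c) := by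
  ext x
  simp only [raise'Finset, raise', add_zero, raise'_replicate_zero, Finset.mem_mk,
    Multiset.mem_coe, List.mem_cons, List.mem_range'_1, Finset.mem_Icc]
  omega

end Denumerable

theorem Primrec.list_replicate {α : Type*} [Primcodable α] : Primrec₂ (@List.replicate α) :=
  (Primrec.list_map (Primrec.list_range.comp .fst) (Primrec.snd.comp .fst).to₂).of_eq fun _ => by
    simp

theorem Computable.finset_Icc_add : Computable₂ fun k c : ℕ => Finset.Icc k (k + c) := by
  have hrep : Primrec₂ fun (k c : ℕ) => k :: List.replicate c 0 :=
    Primrec.list_cons.comp .fst (Primrec.list_replicate.comp .snd (.const 0))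
  exact ((Computable.ofNat (Finset ℕ)).comp (Computable.encode.comp hrep.to_comp)).of_eq fun _ => by
    simp only [Denumerable.ofNat_finset_encode, Denumerable.raise'Finset_cons_replicate_zero]

theorem canonicalNumbering_cond_bodd {F : ℕ → Finset ℕ} (hF : Computable F) :
    CanonicalNumbering fun i => bif i.bodd then Denumerable.ofNat (Finset ℕ) i.div2 else F i := by
  refine ⟨Computable.cond Computable.nat_bodd ((Computable.ofNat _).comp Computable.nat_div2) hF,
    fun s => ⟨Nat.bit true (Denumerable.eqv _ s), ?_⟩⟩
  simp only [Nat.bodd_bit, Nat.div2_bit, cond_true]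
  exact (Denumerable.eqv _).symm_apply_apply s

def blockStrings (c : ℕ → ℕ) (N : ℕ) : Set (List Bool) :=
  {σ | ∃ k, N ≤ k ∧ σ.drop k = List.replicate (c k + 1) true}

theorem ceStrings_blockStrings {c : ℕ → ℕ} (hc : Computable c) (N : ℕ) :
    CEStrings (blockStrings c N) := by
  refine ⟨fun σ k => decide (N ≤ k) && decide (σ.drop k = List.replicate (c k + 1) true), ?_, ?_⟩
  · have hle : Computable₂ fun (_ : List Bool) k => decide (N ≤ k) :=
      (Primrec.nat_le.decide.comp (Primrec.const N) Primrec.snd).to_comp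
    have hrep : Computable fun k => List.replicate (c k + 1) true :=
      Primrec.list_replicate.to_comp.comp (Computable.succ.comp hc) (.const true)
    have hblock : Computable₂ fun (σ : List Bool) k =>
        decide (σ.drop k = List.replicate (c k + 1) true) :=
      Primrec.eq.decide.to_comp.comp (Primrec.list_drop.to_comp.comp .snd .fst) (hrep.comp .snd)
    exact Primrec.and.to_comp.comp₂ hle hblock
  · ext σ; simp [blockStrings]

theorem denseStrings_blockStrings (c : ℕ → ℕ) (N : ℕ) : DenseStrings (blockStrings c N) := by
  intro σ
  set k := max N σ.length
  refine ⟨σ ++ List.replicate (k - σ.length) false ++ List.replicate (c k + 1) true,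
    List.prefix_append_of_prefix (List.prefix_append _ _), k, le_max_left _ _, ?_⟩
  rw [List.drop_left']
  simp only [List.length_append, List.length_replicate]
  omega

theorem initSeg_mem_blockStrings {G : ℕ → Bool} {c : ℕ → ℕ} {N n : ℕ}
    (hn : initSeg G n ∈ blockStrings c N) :
    ∃ k ≥ N, ∀ x ∈ Finset.Icc k (k + c k), G x = true := by
  obtain ⟨k, hNk, hblock⟩ := hn
  refine ⟨k, hNk, fun x hx => ?_⟩
  rw [Finset.mem_Icc] at hx
  have hlen := congrArg List.length hblock
  simp only [initSeg, List.length_drop, List.length_ofFn, List.length_replicate] at hlen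
  have hx' := congrArg (·[x - k]?) hblock
  simp only [initSeg, List.getElem?_drop, List.getElem?_ofFn, List.getElem?_replicate,
    show k + (x - k) = x by omega] at hx'
  simpa [show x < n by omega, show x - k < c k + 1 by omega] using hx'

theorem Weakly1Generic.exists_Icc_subset {G : ℕ → Bool} (hG : Weakly1Generic G) {c : ℕ → ℕ}
    (hc : Computable c) (N : ℕ) : ∃ k ≥ N, ∀ x ∈ Finset.Icc k (k + c k), G x = true :=
  let ⟨_, hn⟩ := hG _ (ceStrings_blockStrings hc N) (denseStrings_blockStrings c N)
  initSeg_mem_blockStrings hn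

/-- No weakly 1-generic real is canonically immune. -/
theorem weakly1generic_not_canonically_immune :
    ∀ G : ℕ → Bool, Weakly1Generic G → ¬ CanonicallyImmune {n | G n = true} := by
  rintro G hG ⟨h, hh, -, hmod⟩
  set D : ℕ → Finset ℕ := fun i =>
    bif i.bodd then Denumerable.ofNat (Finset ℕ) i.div2 else Finset.Icc i.div2 (i.div2 + h i)
  have hD : ∀ k, D (2 * k) = Finset.Icc k (k + h (2 * k)) := fun k => by
    simp [D, Nat.div2_val]
  obtain ⟨N, hN⟩ := Filter.eventually_atTop.1 <| hmod D <|
    canonicalNumbering_cond_bodd (Computable.finset_Icc_add.comp Computable.nat_div2 hh)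
  obtain ⟨k, hNk, hblock⟩ := hG.exists_Icc_subset (hh.comp Primrec.nat_double.to_comp) N
  have hcard := hN (2 * k) (by omega) fun x hx => hblock x (by simpa [hD] using hx)
  rw [hD, Nat.card_Icc] at hcard
  omega
end

section
/- There exists a set R ⊆ ℕ which is canonically immune such that neither R nor its complement ℕ \ R is hyperimmune. -/
open MeasureTheory ProbabilityTheory Filter

/-!
A set chosen by independent fair coin flips works with probability one. For a computable `D`,
the chance that `D i` has more than `i` elements, all in `R`, is at most `2⁻ⁱ`; by Borel–Cantelli
this happens only finitely often, and there are only countably many computable `D`, so `R` is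
canonically immune with modulus `id`. Likewise both `R` and `Rᶜ` meet all but finitely many of the
intervals `[k², (k+1)²)`; then `R` has more than `n` elements below `(2n+1)²` for large `n`, so its
enumeration, and that of `Rᶜ`, is dominated by the computable function `n ↦ (2n+1)²`.
-/

theorem Computable.countable_setOf {σ : Type*} [Primcodable σ] :
    {f : ℕ → σ | Computable f}.Countable := by
  have : Countable {f : ℕ → σ // Computable f} :=
    Function.Injective.countable (f := fun f => (⟨Encodable.encode ∘ f.1,
      Computable.encode.comp f.2⟩ : {g : ℕ → ℕ // Computable g}))
      fun f g h => Subtype.ext <| funext fun n =>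
        Encodable.encode_injective (congrFun (congrArg Subtype.val h) n)
  exact Set.countable_coe_iff.1 this

namespace Nat

variable {p : ℕ → Prop} {a : ℕ → ℕ} {N : ℕ}

theorem sub_le_count_of_forall_exists_mem_Ico [DecidablePred p]
    (h : ∀ k ≥ N, ∃ x ∈ Finset.Ico (a k) (a (k + 1)), p x) (m : ℕ) :
    m - N ≤ count p (a m) := by
  induction m with
  | zero => simp
  | succ m ih =>
    rcases lt_or_ge m N with hm | hm
    · omega
    obtain ⟨x, hmem, hx⟩ := h m hm
    obtain ⟨hax, hxa⟩ := Finset.mem_Ico.1 hmem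
    have : count p (a m) < count p (a (m + 1)) :=
      (count_monotone p hax).trans_lt (count_strict_mono hx hxa)
    omega

theorem infinite_setOf_of_forall_exists_mem_Ico
    (h : ∀ k ≥ N, ∃ x ∈ Finset.Ico (a k) (a (k + 1)), p x) : {x | p x}.Infinite := by
  classical
  intro hfin
  have := sub_le_count_of_forall_exists_mem_Ico h (hfin.toFinset.card + N + 1)
  have := count_le_card (p := p) hfin (a (hfin.toFinset.card + N + 1))
  omega

theorem nth_lt_of_forall_exists_mem_Ico
    (h : ∀ k ≥ N, ∃ x ∈ Finset.Ico (a k) (a (k + 1)), p x) {n : ℕ} (hn : N ≤ n) :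
    nth p n < a (2 * n + 1) := by
  classical
  exact nth_lt_of_lt_count <| (by omega : n < 2 * n + 1 - N).trans_le
    (sub_le_count_of_forall_exists_mem_Ico h _)

end Nat

theorem not_hyperimmune_of_eventually_nth_le {R : Set ℕ} {f : ℕ → ℕ} (hf : Computable f)
    (h : ∀ᶠ n in atTop, Nat.nth (· ∈ R) n ≤ f n) : ¬ Hyperimmune R :=
  fun ⟨_, hR⟩ => hR f hf (h.mono fun _ => not_lt.2)

theorem not_hyperimmune_of_forall_exists_mem_Ico_sq {R : Set ℕ} {N : ℕ}
    (h : ∀ k ≥ N, ∃ x ∈ Finset.Ico (k * k) ((k + 1) * (k + 1)), x ∈ R) : ¬ Hyperimmune R := by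
  refine not_hyperimmune_of_eventually_nth_le (f := fun n => (2 * n + 1) * (2 * n + 1))
    (Primrec.nat_mul.comp Primrec.nat_double_succ Primrec.nat_double_succ).to_comp ?_
  filter_upwards [eventually_ge_atTop N] with n hn
  exact (Nat.nth_lt_of_forall_exists_mem_Ico (a := fun k => k * k) h hn).le

noncomputable def coinFlips : Measure (ℕ → Bool) :=
  Measure.infinitePi fun _ => uniformOn Set.univ

instance : IsProbabilityMeasure coinFlips := by
  unfold coinFlips; infer_instance

theorem coinFlips_setOf_forall_mem_eq (s : Finset ℕ) (b : Bool) :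
    coinFlips {G | ∀ x ∈ s, G x = b} = 2⁻¹ ^ s.card := by
  have : {G : ℕ → Bool | ∀ x ∈ s, G x = b} = Set.pi s fun _ => {b} := by
    ext G; simp
  rw [this, coinFlips, Measure.infinitePi_pi _ fun _ _ => measurableSet_singleton b,
    Finset.prod_const, uniformOn_univ, Measure.count_singleton, Fintype.card_bool]
  norm_num

theorem ae_coinFlips_eventually_exists_ne (s : ℕ → Finset ℕ) (b : Bool) :
    ∀ᵐ G ∂coinFlips, ∀ᶠ k in atTop, k ≤ (s k).card → ∃ x ∈ s k, G x ≠ b := by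
  have hle : ∀ k, coinFlips {G | k ≤ (s k).card ∧ ∀ x ∈ s k, G x = b} ≤ 2⁻¹ ^ k := by
    intro k
    by_cases hk : k ≤ (s k).card
    · calc _ ≤ coinFlips {G | ∀ x ∈ s k, G x = b} := measure_mono fun G hG => hG.2
        _ = 2⁻¹ ^ (s k).card := coinFlips_setOf_forall_mem_eq _ _
        _ ≤ 2⁻¹ ^ k := pow_le_pow_right_of_le_one' (by norm_num) hk
    · simp [hk]
  have hsum : ∑' k, coinFlips {G | k ≤ (s k).card ∧ ∀ x ∈ s k, G x = b} ≠ ⊤ :=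
    ne_top_of_le_ne_top (by simp [ENNReal.tsum_geometric, ENNReal.one_sub_inv_two])
      (ENNReal.tsum_le_tsum hle)
  filter_upwards [ae_eventually_notMem hsum] with G hG
  filter_upwards [hG] with k hk hcard
  simpa [hcard] using hk

/-- There is a canonically immune set such that neither it nor its complement
is hyperimmune. -/
theorem exists_canonically_immune_not_hyperimmune :
    ∃ R : Set ℕ, CanonicallyImmune R ∧ ¬ Hyperimmune R ∧ ¬ Hyperimmune Rᶜ := by
  let square k := Finset.Ico (k * k) ((k + 1) * (k + 1))
  have hsquare (k : ℕ) : k ≤ (square k).card := by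
    simp only [square, Nat.card_Ico]
    exact Nat.le_sub_of_add_le (by nlinarith)
  have hsubsets := (ae_ball_iff Computable.countable_setOf).2
    fun D (_ : Computable D) => ae_coinFlips_eventually_exists_ne D true
  obtain ⟨G, hGD, hG0, hG1⟩ := (hsubsets.and ((ae_coinFlips_eventually_exists_ne square false).and
    (ae_coinFlips_eventually_exists_ne square true))).exists
  obtain ⟨N₀, hN₀⟩ := eventually_atTop.1 hG0
  obtain ⟨N₁, hN₁⟩ := eventually_atTop.1 hG1
  have hR : ∀ k ≥ N₀, ∃ x ∈ square k, x ∈ {n | G n = true} := fun k hk => by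
    simpa using hN₀ k hk (hsquare k)
  have hRc : ∀ k ≥ N₁, ∃ x ∈ square k, x ∈ {n | G n = true}ᶜ := fun k hk => by
    simpa using hN₁ k hk (hsquare k)
  refine ⟨{n | G n = true}, ⟨id, Computable.id, Nat.infinite_setOf_of_forall_exists_mem_Ico hR,
    fun D hD => ?_⟩, not_hyperimmune_of_forall_exists_mem_Ico_sq hR,
    not_hyperimmune_of_forall_exists_mem_Ico_sq hRc⟩
  filter_upwards [hGD D hD.1] with i hi hsub
  by_contra hlt
  obtain ⟨x, hx, hGx⟩ := hi (not_le.1 hlt).le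
  exact hGx (hsub hx)
end

section
/- Every canonically immune set is immune, i.e., contains no infinite computably enumerable subset. -/
/-!
Suppose `R` is canonically immune with computable modulus `h` but contains an infinite c.e.
set `W`. Enumerating `W` until more than `h i` elements have appeared computes, uniformly in
`i`, a finite subset `F i ⊆ W ⊆ R` with `h i < |F i|`. Interleaving `F` with a standard
numbering of all finite sets gives a canonical numbering `D` with `D i = F i` for infinitely
many `i`, contradicting `|D i| ≤ h i` for almost all `i` with `D i ⊆ R`.
-/

open Nat.Partrec (Code)
open Nat.Partrec.Code Filter

namespace Denumerable

theorem lower'_eq_foldl (l acc : List ℕ) (n : ℕ) :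
    (l.foldl (fun p m => (p.1 ++ [m - p.2], m + 1)) (acc, n)).1 = acc ++ lower' l n := by
  induction l generalizing acc n with
  | nil => simp [lower']
  | cons m l ih => simp [lower', ih]

theorem primrec₂_lower' : Primrec₂ lower' := by
  have step : Primrec₂ fun (_ : List ℕ × ℕ) (q : (List ℕ × ℕ) × ℕ) =>
      ((q.1.1 ++ [q.2 - q.1.2], q.2 + 1) : List ℕ × ℕ) :=
    (Primrec.list_concat.comp (Primrec.fst.comp (Primrec.fst.comp Primrec.snd))
      (Primrec.nat_sub.comp (Primrec.snd.comp Primrec.snd)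
        (Primrec.snd.comp (Primrec.fst.comp Primrec.snd)))).pair
      (Primrec.succ.comp (Primrec.snd.comp Primrec.snd))
  have fold := Primrec.fst.comp <| Primrec.list_foldl Primrec.fst
    ((Primrec.const ([] : List ℕ)).pair Primrec.snd) step
  exact fold.of_eq fun p => by simp [lower'_eq_foldl]

/- `Finset ℕ` is coded by the list of gaps `lower' · 0` of its sorted elements. -/
theorem ofNat_encode_lower'_zero {l : List ℕ} (hl : l.SortedLT) :
    ofNat (Finset ℕ) (Encodable.encode (lower' l 0)) = l.toFinset := by
  change Finset.map (eqv ℕ).symm.toEmbedding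
    (raise'Finset (ofNat (List ℕ) (Encodable.encode (lower' l 0))) 0) = _
  ext x
  simp [raise'Finset, raise_lower' (fun m _ => Nat.zero_le m) hl]
  rfl

theorem length_lower' (l : List ℕ) (n : ℕ) : (lower' l n).length = l.length := by
  induction l generalizing n with
  | nil => rfl
  | cons m l ih => simp [lower', ih]

end Denumerable

theorem Primrec.finset_card : Primrec (Finset.card : Finset ℕ → ℕ) :=
  (Primrec.list_length.comp <| (Primrec.ofNat (List ℕ)).comp Primrec.encode).of_eq fun s => by
    change (Denumerable.ofNat (List ℕ) (Encodable.encode (Denumerable.lower'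
      (s.map (Denumerable.eqv ℕ).toEmbedding).sort 0))).length = _
    simp [Denumerable.length_lower']

theorem Primrec.list_toFinset_of_sortedLT {α : Type*} [Primcodable α] {f : α → List ℕ}
    (hf : Primrec f) (hs : ∀ a, (f a).SortedLT) : Primrec fun a => (f a).toFinset :=
  ((Primrec.ofNat (Finset ℕ)).comp <| Primrec.encode.comp <|
    Denumerable.primrec₂_lower'.comp hf (Primrec.const 0)).of_eq fun a =>
    Denumerable.ofNat_encode_lower'_zero (hs a)

/-- The stage-`s` approximation `W_{e,s}` of `WSet e`. -/
def WStage (e s : ℕ) : Finset ℕ :=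
  {n ∈ Finset.range s | (evaln s (Denumerable.ofNat Code e) n).isSome}

theorem mem_WStage {e s n : ℕ} :
    n ∈ WStage e s ↔ (evaln s (Denumerable.ofNat Code e) n).isSome := by
  refine Finset.mem_filter.trans (and_iff_right_of_imp fun h => ?_)
  obtain ⟨x, hx⟩ := Option.isSome_iff_exists.1 h
  exact Finset.mem_range.2 (evaln_bound hx)

theorem coe_WStage_subset_WSet (e s : ℕ) : ↑(WStage e s) ⊆ WSet e := by
  intro n hn
  obtain ⟨x, hx⟩ := Option.isSome_iff_exists.1 (mem_WStage.1 hn)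
  exact Part.dom_iff_mem.2 ⟨x, evaln_sound hx⟩

theorem eventually_mem_WStage {e n : ℕ} (hn : n ∈ WSet e) : ∀ᶠ s in atTop, n ∈ WStage e s := by
  obtain ⟨x, hx⟩ := Part.dom_iff_mem.1 hn
  obtain ⟨k, hk⟩ := evaln_complete.1 hx
  exact eventually_atTop.2 ⟨k, fun s hs =>
    mem_WStage.2 (Option.isSome_iff_exists.2 ⟨x, evaln_mono hs hk⟩)⟩

theorem exists_lt_card_WStage {e : ℕ} (hinf : (WSet e).Infinite) (m : ℕ) :
    ∃ s, m < (WStage e s).card := by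
  obtain ⟨t, htW, htcard⟩ := hinf.exists_subset_card_eq (m + 1)
  obtain ⟨s, hts⟩ := ((eventually_all_finset t).2 fun n hn =>
    eventually_mem_WStage (htW hn)).exists
  exact ⟨s, by have := Finset.card_le_card hts; omega⟩

theorem primrec_WStage (e : ℕ) : Primrec (WStage e) := by
  have hrel : PrimrecRel fun n s => (evaln s (Denumerable.ofNat Code e) n).isSome := by
    refine PrimrecRel.comp₂ Primrec.eq ?_ (Primrec.const true).to₂
    exact Primrec.option_isSome.comp <| primrec_evaln.comp <|
      (Primrec.snd.pair (Primrec.const _)).pair Primrec.fst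
  have hlist := (PrimrecRel.listFilter hrel).comp Primrec.list_range Primrec.id
  refine (Primrec.list_toFinset_of_sortedLT hlist fun s =>
    (List.pairwise_lt_range.sublist List.filter_sublist).sortedLT).of_eq fun s => ?_
  ext n
  simp [WStage]

theorem exists_computable_finset_subset_WSet {e : ℕ} (hinf : (WSet e).Infinite) :
    ∃ F : ℕ → Finset ℕ, Computable F ∧ ∀ m, ↑(F m) ⊆ WSet e ∧ m < (F m).card := by
  have hlt : ComputablePred fun p : ℕ × ℕ => p.1 < (WStage e p.2).card :=
    (PrimrecRel.comp Primrec.nat_lt Primrec.fst <|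
      Primrec.finset_card.comp ((primrec_WStage e).comp Primrec.snd)).computablePred
  exact ⟨fun m => WStage e (Nat.find (exists_lt_card_WStage hinf m)),
    (primrec_WStage e).to_comp.comp (Computable.find hlt _),
    fun m => ⟨coe_WStage_subset_WSet e _, Nat.find_spec (exists_lt_card_WStage hinf m)⟩⟩

theorem exists_canonicalNumbering_frequently_eq {F : ℕ → Finset ℕ} (hF : Computable F) :
    ∃ D, CanonicalNumbering D ∧ ∃ᶠ i in atTop, D i = F i := by
  let eqv := Denumerable.eqv (Finset ℕ ⊕ ℕ)
  -- indices coding `inl s` list every finite set, those coding `inr _` copy `F`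
  refine ⟨fun i => (eqv.symm i).elim id fun _ => F i, ⟨?_, ?_⟩, ?_⟩
  · exact Computable.sumCasesOn (Computable.ofNat _) Computable.snd.to₂
      (hF.comp Computable.fst).to₂
  · exact fun s => ⟨eqv (Sum.inl s), by simp⟩
  · refine Nat.frequently_atTop_iff_infinite.2 <|
      (Set.infinite_range_of_injective (eqv.injective.comp Sum.inr_injective)).mono ?_
    rintro _ ⟨N, rfl⟩
    simp

/-- Every canonically immune set is immune: it is infinite and contains no infinite
c.e. subset. -/
theorem canonically_immune_immune :
    ∀ R : Set ℕ, CanonicallyImmune R →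
      R.Infinite ∧ ∀ e : ℕ, (WSet e).Infinite → ¬ WSet e ⊆ R := by
  rintro R ⟨h, hh, hRinf, himm⟩
  refine ⟨hRinf, fun e hWinf hWR => ?_⟩
  obtain ⟨F, hF, hFW⟩ := exists_computable_finset_subset_WSet hWinf
  obtain ⟨D, hD, hDF⟩ := exists_canonicalNumbering_frequently_eq (hF.comp hh)
  obtain ⟨i, hbound, hDi⟩ := ((himm D hD).and_frequently hDF).exists
  rw [hDi] at hbound
  exact (hbound ((hFW (h i)).1.trans hWR)).not_gt (hFW (h i)).2
end
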